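/- arXiv:1508.07256 — 3 statements merged into one kernel-verified Lean document; each statement's English description precedes it below -/
import Mathlib

section
/- If a class C of finite graphs is limit quasi-wide, then C is limit topologically nowhere dense, i.e., the countably infinite clique K_ω does not belong to C*∇̃ω. -/
namespace NWD

open SimpleGraph Filter

/-! ### Shallow minors -/

/-- A `d`-shallow minor model of `H` in `G`: a family of pairwise disjoint branch sets,
each connected of radius at most `d` (witnessed by a center joined to every vertex of the
branch set by a walk of length at most `d` inside the branch set), such that every edge of `H`
is realized by an edge of `G` between the corresponding branch sets. -/
def IsShallowMinorModel {V W : Type} (G : SimpleGraph V) (H : SimpleGraph W) (d : ℕ)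
    (α : W → G.Subgraph) : Prop :=
  (∀ w : W, ∃ c : (α w).verts, ∀ x : (α w).verts, ∃ p : (α w).coe.Walk c x, p.length ≤ d) ∧
  (∀ w w' : W, w ≠ w' → Disjoint (α w).verts (α w').verts) ∧
  (∀ w w' : W, H.Adj w w' → ∃ x ∈ (α w).verts, ∃ y ∈ (α w').verts, G.Adj x y)

/-- `H` is a shallow minor of `G` at depth `d`. -/
def IsShallowMinor {V W : Type} (G : SimpleGraph V) (H : SimpleGraph W) (d : ℕ) : Prop :=
  ∃ α : W → G.Subgraph, IsShallowMinorModel G H d α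

/-! ### Topological shallow minors -/

/-- A `d`-shallow topological minor model of `H` in `G`: an injective map `f` on vertices
together with, for every edge `uv` of `H`, a path of length at most `2d+1` in `G` from `f u`
to `f v`; the paths are pairwise vertex-disjoint apart from possibly sharing endpoints. -/
def IsTopMinorModel {V W : Type} (G : SimpleGraph V) (H : SimpleGraph W) (d : ℕ)
    (f : W → V) (P : ∀ ⦃u v : W⦄, H.Adj u v → G.Walk (f u) (f v)) : Prop :=
  Function.Injective f ∧
  (∀ ⦃u v : W⦄ (h : H.Adj u v), (P h).IsPath) ∧
  (∀ ⦃u v : W⦄ (h : H.Adj u v), (P h).length ≤ 2 * d + 1) ∧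
  (∀ ⦃u v : W⦄ (h : H.Adj u v), P h.symm = (P h).reverse) ∧
  (∀ ⦃u v u' v' : W⦄ (h : H.Adj u v) (h' : H.Adj u' v'), s(u, v) ≠ s(u', v') →
    ∀ x : V, x ∈ (P h).support → x ∈ (P h').support →
      (x = f u ∨ x = f v) ∧ (x = f u' ∨ x = f v'))

/-- `H` is a topological shallow minor of `G` at depth `d`. -/
def IsTopShallowMinor {V W : Type} (G : SimpleGraph V) (H : SimpleGraph W) (d : ℕ) : Prop :=
  ∃ (f : W → V) (P : ∀ ⦃u v : W⦄, H.Adj u v → G.Walk (f u) (f v)),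
    IsTopMinorModel G H d f P

/-! ### Ultraproducts of graphs -/

/-- The setoid identifying sequences agreeing on a set of the ultrafilter. -/
def prodSetoid (U : Ultrafilter ℕ) (Vs : ℕ → Type) : Setoid (∀ n, Vs n) where
  r g h := ∀ᶠ n in (U : Filter ℕ), g n = h n
  iseqv := by
    constructor
    · intro g; exact Eventually.of_forall fun n => rfl
    · intro g h hg; exact hg.mono fun n hn => hn.symm
    · intro g h k h1 h2; filter_upwards [h1, h2] with n e1 e2; rw [e1, e2]

/-- The vertex set of the ultraproduct. -/
def UVertex (U : Ultrafilter ℕ) (Vs : ℕ → Type) : Type := Quotient (prodSetoid U Vs)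

/-- The ultraproduct of a sequence of graphs along the ultrafilter `U`. -/
def UGraph (U : Ultrafilter ℕ) {Vs : ℕ → Type} (Gs : ∀ n, SimpleGraph (Vs n)) :
    SimpleGraph (UVertex U Vs) where
  Adj x y := Quotient.liftOn₂ x y
    (fun g h => ∀ᶠ n in (U : Filter ℕ), (Gs n).Adj (g n) (h n))
    (by
      intro a b a' b' ha hb
      apply propext
      constructor
      · intro hadj; filter_upwards [hadj, ha, hb] with n h1 h2 h3; rw [← h2, ← h3]; exact h1
      · intro hadj; filter_upwards [hadj, ha, hb] with n h1 h2 h3; rw [h2, h3]; exact h1)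
  symm := by
    constructor
    intro x y
    refine Quotient.inductionOn₂ x y ?_
    intro g h hadj
    exact hadj.mono fun n hn => hn.symm
  loopless := by
    constructor
    intro x
    refine Quotient.inductionOn x ?_
    intro g hadj
    obtain ⟨n, hn⟩ := hadj.exists
    exact (Gs n).irrefl hn

/-! ### Graph classes and class limits -/

/-- A class of graphs: a predicate on graphs over arbitrary vertex types. -/
def GraphClass : Type 1 := ∀ V : Type, SimpleGraph V → Prop

/-- `C` is a class of finite graphs. -/
def FiniteClass (C : GraphClass) : Prop :=
  ∀ (V : Type) (G : SimpleGraph V), C V G → Finite V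

/-- `H` is (isomorphic to) a subgraph of `G`. -/
def IsSubgraphOf {W V : Type} (H : SimpleGraph W) (G : SimpleGraph V) : Prop :=
  ∃ f : W → V, Function.Injective f ∧ ∀ ⦃u v : W⦄, H.Adj u v → G.Adj (f u) (f v)

/-- Membership in the class limit `C*`: subgraphs of ultraproducts of sequences from `C`. -/
def InLimit (U : Ultrafilter ℕ) (C : GraphClass) {W : Type} (H : SimpleGraph W) : Prop :=
  ∃ (Vs : ℕ → Type) (Gs : ∀ n, SimpleGraph (Vs n)),
    (∀ n, C (Vs n) (Gs n)) ∧ IsSubgraphOf H (UGraph U Gs)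

/-- `H ∈ C ▽ d`. -/
def InClassMinor (C : GraphClass) (d : ℕ) {W : Type} (H : SimpleGraph W) : Prop :=
  ∃ (V : Type) (G : SimpleGraph V), C V G ∧ IsShallowMinor G H d

/-- `H ∈ C ∇̃ d`. -/
def InClassTopMinor (C : GraphClass) (d : ℕ) {W : Type} (H : SimpleGraph W) : Prop :=
  ∃ (V : Type) (G : SimpleGraph V), C V G ∧ IsTopShallowMinor G H d

/-- `H ∈ C* ▽ d`. -/
def InLimitMinor (U : Ultrafilter ℕ) (C : GraphClass) (d : ℕ) {W : Type}
    (H : SimpleGraph W) : Prop :=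
  ∃ (V : Type) (G : SimpleGraph V), InLimit U C G ∧ IsShallowMinor G H d

/-- `H ∈ C* ∇̃ d`. -/
def InLimitTopMinor (U : Ultrafilter ℕ) (C : GraphClass) (d : ℕ) {W : Type}
    (H : SimpleGraph W) : Prop :=
  ∃ (V : Type) (G : SimpleGraph V), InLimit U C G ∧ IsTopShallowMinor G H d

/-- `C` is somewhere dense: all finite graphs are shallow minors at some fixed depth. -/
def SomewhereDense (C : GraphClass) : Prop :=
  ∃ d : ℕ, ∀ (W : Type) (H : SimpleGraph W), Finite W → InClassMinor C d H

/-- `C` is topologically somewhere dense. -/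
def TopSomewhereDense (C : GraphClass) : Prop :=
  ∃ d : ℕ, ∀ (W : Type) (H : SimpleGraph W), Finite W → InClassTopMinor C d H

/-- The countably infinite clique `K_ω`. -/
def Komega : SimpleGraph ℕ := ⊤

/-- The clique on continuum many vertices `K_𝔠`. -/
def Kcontinuum : SimpleGraph (Set ℕ) := ⊤

/-- `C` is hereditary: closed under induced subgraphs. -/
def Hereditary (C : GraphClass) : Prop :=
  ∀ (V : Type) (G : SimpleGraph V), C V G →
    ∀ (W : Type) (f : W → V), Function.Injective f → C W (G.comap f)

/-! ### Scattered sets and quasi-wideness -/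

/-- `X` is a `d`-scattered set of `G - S`: it avoids `S`, and any two distinct vertices of `X`
are at distance greater than `2d` in `G - S` (every connecting walk avoiding `S` is longer
than `2d`). -/
def ScatteredIn {V : Type} (G : SimpleGraph V) (d : ℕ) (S X : Set V) : Prop :=
  Disjoint X S ∧ ∀ u ∈ X, ∀ v ∈ X, u ≠ v →
    ∀ p : G.Walk u v, (∀ x ∈ p.support, x ∉ S) → 2 * d < p.length

/-- `C` is quasi-wide with margin `s`. -/
def QuasiWide (C : GraphClass) (s : ℕ → ℕ) : Prop :=
  ∀ d m : ℕ, ∃ N : ℕ, ∀ (V : Type) (G : SimpleGraph V), C V G → N ≤ Nat.card V →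
    ∃ S X : Set V, S.Finite ∧ S.ncard ≤ s d ∧ X.Finite ∧ X.ncard = m ∧ ScatteredIn G d S X

/-- `C` is uniformly quasi-wide with margin `s`. -/
def UniformlyQuasiWide (C : GraphClass) (s : ℕ → ℕ) : Prop :=
  ∀ d m : ℕ, ∃ N : ℕ, ∀ (V : Type) (G : SimpleGraph V), C V G →
    ∀ W : Set V, N ≤ W.ncard →
      ∃ S X : Set V, S.Finite ∧ S.ncard ≤ s d ∧ X ⊆ W ∧ X.Finite ∧ X.ncard = m ∧
        ScatteredIn G d S X

/-- `C` is limit quasi-wide. -/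
def LimitQW (U : Ultrafilter ℕ) (C : GraphClass) : Prop :=
  ∀ (d : ℕ) (V : Type) (G : SimpleGraph V), InLimit U C G → Infinite V →
    ∃ S X : Set V, S.Finite ∧ X.Infinite ∧ ScatteredIn G d S X

/-- `C` is uniformly limit quasi-wide. -/
def UniformLimitQW (U : Ultrafilter ℕ) (C : GraphClass) : Prop :=
  ∀ (d : ℕ) (V : Type) (G : SimpleGraph V), InLimit U C G →
    ∀ W : Set V, W.Infinite →
      ∃ S X : Set V, S.Finite ∧ X ⊆ W ∧ X.Infinite ∧ ScatteredIn G d S X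

/-- `C` is strongly limit quasi-wide with margin `s`. -/
def StrongLimitQW (U : Ultrafilter ℕ) (C : GraphClass) (s : ℕ → ℕ) : Prop :=
  ∀ (d : ℕ) (V : Type) (G : SimpleGraph V), InLimit U C G → Infinite V →
    ∃ S X : Set V, S.Finite ∧ S.ncard ≤ s d ∧ X.Infinite ∧ ScatteredIn G d S X

/-- `C` is strongly uniformly limit quasi-wide with margin `s`. -/
def StrongUniformLimitQW (U : Ultrafilter ℕ) (C : GraphClass) (s : ℕ → ℕ) : Prop :=
  ∀ (d : ℕ) (V : Type) (G : SimpleGraph V), InLimit U C G →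
    ∀ W : Set V, W.Infinite →
      ∃ S X : Set V, S.Finite ∧ S.ncard ≤ s d ∧ X ⊆ W ∧ X.Infinite ∧ ScatteredIn G d S X

/-! ### The splitter game -/

/-- One round of the splitter game: from arena `A`, connector picks `v`, splitter picks `W`;
the new arena consists of the vertices of `A` outside `W` at distance at most `d` from `v`
in the subgraph induced by `A`. -/
def arenaStep {V : Type} (G : SimpleGraph V) (d : ℕ) (A : Set V) (v : V) (W : Set V) : Set V :=
  {x | x ∈ A ∧ x ∉ W ∧ ∃ p : G.Walk v x, p.length ≤ d ∧ ∀ y ∈ p.support, y ∈ A}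

/-- The arena after a (chronological) history of moves. -/
def arenaAfter {V : Type} (G : SimpleGraph V) (d : ℕ) (hist : List (V × Set V)) : Set V :=
  hist.foldl (fun A mv => arenaStep G d A mv.1 mv.2) Set.univ

/-- A strategy for splitter: given the history and connector's new move, produce a set. -/
def SplitterStrategy (V : Type) : Type := List (V × Set V) → V → Set V

/-- The history of the play where connector plays `c` and splitter follows `σ`. -/
def splitterHist {V : Type} (σ : SplitterStrategy V) (c : ℕ → V) : ℕ → List (V × Set V)
  | 0 => []
  | n + 1 => splitterHist σ c n ++ [(c n, σ (splitterHist σ c n) (c n))]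

/-- Connector's first `n` moves are valid (inside the successive arenas). -/
def ConsistentPlay {V : Type} (G : SimpleGraph V) (d : ℕ) (σ : SplitterStrategy V)
    (c : ℕ → V) (n : ℕ) : Prop :=
  ∀ k < n, c k ∈ arenaAfter G d (splitterHist σ c k)

/-- `σ` is a winning strategy for splitter in the limit `d`-splitter game on `G`:
its moves are valid (finite subsets of the arena) along any consistent play, and no
infinite sequence of valid connector moves exists. -/
def SplitterWinsLimit {V : Type} (G : SimpleGraph V) (d : ℕ) (σ : SplitterStrategy V) : Prop :=
  (∀ (c : ℕ → V) (n : ℕ), ConsistentPlay G d σ c (n + 1) →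
      (σ (splitterHist σ c n) (c n)).Finite ∧
      σ (splitterHist σ c n) (c n) ⊆ arenaAfter G d (splitterHist σ c n)) ∧
  (∀ c : ℕ → V, ∃ n : ℕ, c n ∉ arenaAfter G d (splitterHist σ c n))

/-- `σ` is a winning strategy for splitter in the `(ℓ, m, d)`-splitter game on `G`. -/
def SplitterWinsGame {V : Type} (G : SimpleGraph V) (l m d : ℕ) (σ : SplitterStrategy V) :
    Prop :=
  (∀ (c : ℕ → V) (n : ℕ), ConsistentPlay G d σ c (n + 1) →
      (σ (splitterHist σ c n) (c n)).Finite ∧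
      (σ (splitterHist σ c n) (c n)).ncard ≤ m ∧
      σ (splitterHist σ c n) (c n) ⊆ arenaAfter G d (splitterHist σ c n)) ∧
  (∀ c : ℕ → V, ∃ n ≤ l, c n ∉ arenaAfter G d (splitterHist σ c n))

/-- A strategy for connector: given the history, produce a vertex. -/
def ConnectorStrategy (V : Type) : Type := List (V × Set V) → V

/-- The history of the play where connector follows `τ` and splitter plays `w`. -/
def connectorHist {V : Type} (τ : ConnectorStrategy V) (w : ℕ → Set V) :
    ℕ → List (V × Set V)
  | 0 => []
  | n + 1 => connectorHist τ w n ++ [(τ (connectorHist τ w n), w n)]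

/-- `τ` is a winning strategy for connector in the limit `d`-splitter game on `G`:
as long as splitter's moves are valid, connector's moves stay in the arena forever. -/
def ConnectorWinsLimit {V : Type} (G : SimpleGraph V) (d : ℕ) (τ : ConnectorStrategy V) :
    Prop :=
  ∀ (w : ℕ → Set V) (n : ℕ),
    (∀ k < n, (w k).Finite ∧ w k ⊆ arenaAfter G d (connectorHist τ w k)) →
    τ (connectorHist τ w n) ∈ arenaAfter G d (connectorHist τ w n)

/-- `τ` is a winning strategy for connector in the `(ℓ, m, d)`-splitter game on `G`:
the arena stays nonempty for `ℓ` rounds, i.e. connector has valid moves at rounds `0,…,ℓ`. -/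
def ConnectorWinsGame {V : Type} (G : SimpleGraph V) (l m d : ℕ) (τ : ConnectorStrategy V) :
    Prop :=
  ∀ (w : ℕ → Set V) (n : ℕ), n ≤ l →
    (∀ k < n, (w k).Finite ∧ (w k).ncard ≤ m ∧
      w k ⊆ arenaAfter G d (connectorHist τ w k)) →
    τ (connectorHist τ w n) ∈ arenaAfter G d (connectorHist τ w n)

/-- `C` is winning for splitter. -/
def WinningForSplitter (C : GraphClass) : Prop :=
  ∀ d : ℕ, ∃ l m : ℕ, ∀ (V : Type) (G : SimpleGraph V), C V G →
    ∃ σ : SplitterStrategy V, SplitterWinsGame G l m d σ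

/-- `C` is limit winning for splitter. -/
def LimitWinningForSplitter (U : Ultrafilter ℕ) (C : GraphClass) : Prop :=
  ∀ (d : ℕ) (V : Type) (G : SimpleGraph V), InLimit U C G →
    ∃ σ : SplitterStrategy V, SplitterWinsLimit G d σ

/-! ### First-order satisfaction in graphs -/

/-- `G` satisfies the first-order sentence `φ` in the language of graphs. -/
def GSat {V : Type} (G : SimpleGraph V) (φ : FirstOrder.Language.graph.Sentence) : Prop :=
  @FirstOrder.Language.Sentence.Realize FirstOrder.Language.graph V G.structure φ


/-!
Take a depth-`d` topological model of `K_ω` in a graph of `C*` and pass to the subgraph `M`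
induced by its paths, which is again an infinite graph of `C*`. Quasi-wideness yields a finite
`S` and an infinite `(3d+2)`-scattered set `X` in `M - S`. An inner vertex of a model path lies
on no other path, so only finitely many paths meet `S` in their interior, and only finitely many
have both ends in `S`; every vertex of `X` off these paths reaches some branch vertex (its
anchor) within `M - S` in at most `2d+1` steps. By pigeonhole two vertices of `X` either share
an anchor or have distinct anchors whose connecting path avoids `S`; either way they are joined
in `M - S` by a walk of length at most `3(2d+1) < 2(3d+2)`.
-/

theorem _root_.Set.Infinite.exists_ne_map_eq_or_notMem {α β : Type*} {X : Set α} (hX : X.Infinite)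
    (g : α → β) {F : Set β} (hF : F.Finite) :
    ∃ x ∈ X, ∃ y ∈ X, x ≠ y ∧ (g x = g y ∨ (g x ∉ F ∧ g y ∉ F)) := by
  by_cases hg : Set.InjOn g X
  · have hXF : (X ∩ g ⁻¹' F).Finite :=
      Set.Finite.of_finite_image (hF.subset (by simp [Set.image_subset_iff]))
        (hg.mono Set.inter_subset_left)
    obtain ⟨x, hx, y, hy, hxy⟩ := (hX.sdiff hXF).nontrivial
    exact ⟨x, hx.1, y, hy.1, hxy, .inr ⟨fun h => hx.2 ⟨hx.1, h⟩, fun h => hy.2 ⟨hy.1, h⟩⟩⟩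
  · simp only [Set.InjOn, not_forall] at hg
    obtain ⟨x, hx, y, hy, hgxy, hxy⟩ := hg
    exact ⟨x, hx, y, hy, hxy, .inl hgxy⟩

lemma InLimit.of_isSubgraphOf {U : Ultrafilter ℕ} {C : GraphClass} {V W : Type}
    {G : SimpleGraph V} {H : SimpleGraph W} (hG : InLimit U C G) (hHG : IsSubgraphOf H G) :
    InLimit U C H := by
  obtain ⟨Vs, Gs, hC, g, hg, hadj⟩ := hG
  obtain ⟨e, he, hadj'⟩ := hHG
  exact ⟨Vs, Gs, hC, g ∘ e, hg.comp he, fun _ _ h => hadj (hadj' h)⟩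

lemma isSubgraphOf_induce {V : Type} (G : SimpleGraph V) (s : Set V) :
    IsSubgraphOf (G.induce s) G :=
  ⟨Subtype.val, Subtype.val_injective, fun _ _ h => h⟩

lemma ScatteredIn.lt_length_of_induce {V : Type} {G : SimpleGraph V} {r : ℕ} {s : Set V}
    {S X : Set s} (hX : ScatteredIn (G.induce s) r S X) {x y : s} (hx : x ∈ X) (hy : y ∈ X)
    (hxy : x ≠ y) (p : G.Walk x y) (hps : ∀ z ∈ p.support, z ∈ s)
    (hpS : ∀ z ∈ p.support, z ∉ Subtype.val '' S) : 2 * r < p.length := by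
  have hlen : (p.induce s hps).length = p.length := by
    have h := congrArg Walk.length (p.map_induce hps)
    rwa [Walk.length_map] at h
  rw [← hlen]
  refine hX.2 x hx y hy hxy _ fun z hz hzS => ?_
  rw [Walk.support_induce, List.mem_attachWith] at hz
  exact hpS z hz ⟨z, hzS, rfl⟩

section TopMinorModel

variable {V W : Type} {G : SimpleGraph V} {H : SimpleGraph W} {d : ℕ} {f : W → V}

def modelVerts (P : ∀ ⦃u v : W⦄, H.Adj u v → G.Walk (f u) (f v)) : Set V :=
  {x | ∃ (a b : W) (h : H.Adj a b), x ∈ (P h).support}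

def edgeVerts (P : ∀ ⦃u v : W⦄, H.Adj u v → G.Walk (f u) (f v)) (e : W × W) : Set V :=
  {x | ∃ h : H.Adj e.1 e.2, x ∈ (P h).support}

def HitsInterior (P : ∀ ⦃u v : W⦄, H.Adj u v → G.Walk (f u) (f v)) (S : Set V)
    (e : W × W) : Prop :=
  ∃ h : H.Adj e.1 e.2, ∃ w ∈ (P h).support, w ∈ S ∧ w ≠ f e.1 ∧ w ≠ f e.2

variable {P : ∀ ⦃u v : W⦄, H.Adj u v → G.Walk (f u) (f v)}

lemma edgeVerts_finite (e : W × W) : (edgeVerts P e).Finite := by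
  by_cases h : H.Adj e.1 e.2
  · exact (P h).support.finite_toSet.subset fun _ ⟨_, hx⟩ => hx
  · exact Set.finite_empty.subset fun _ ⟨h', _⟩ => (h h').elim

lemma IsTopMinorModel.mem_support_symm (hM : IsTopMinorModel G H d f P) {a b : W}
    (h : H.Adj a b) {x : V} : x ∈ (P h.symm).support ↔ x ∈ (P h).support := by
  rw [hM.2.2.2.1 h, Walk.support_reverse, List.mem_reverse]

-- An inner vertex of a model path lies on no other path, so each `w ∈ S` hits one edge.
lemma IsTopMinorModel.finite_setOf_hitsInterior (hM : IsTopMinorModel G H d f P) {S : Set V}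
    (hS : S.Finite) : {e : W × W | HitsInterior P S e}.Finite := by
  have hw : ∀ w ∈ S, {e : W × W | ∃ h : H.Adj e.1 e.2,
      w ∈ (P h).support ∧ w ≠ f e.1 ∧ w ≠ f e.2}.Finite := by
    intro w _
    rcases Set.eq_empty_or_nonempty {e : W × W | ∃ h : H.Adj e.1 e.2,
      w ∈ (P h).support ∧ w ≠ f e.1 ∧ w ≠ f e.2} with hempty | ⟨⟨a₀, b₀⟩, h₀, hw₀, -, -⟩
    · exact hempty ▸ Set.finite_empty
    refine (Set.toFinite {(a₀, b₀), (b₀, a₀)}).subset ?_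
    rintro ⟨a, b⟩ ⟨h, hw, ha, hb⟩
    by_contra hne
    have hedge : s(a, b) ≠ s(a₀, b₀) := by
      simp only [Set.mem_insert_iff, Set.mem_singleton_iff, Prod.mk.injEq] at hne
      simpa [Sym2.eq_iff] using hne
    exact ha ((hM.2.2.2.2 h h₀ hedge w hw hw₀).1.resolve_right hb)
  refine (hS.biUnion hw).subset ?_
  rintro e ⟨h, w, hwP, hwS, ha, hb⟩
  exact Set.mem_biUnion hwS ⟨h, hwP, ha, hb⟩

lemma IsTopMinorModel.exists_walk_to_branch (hM : IsTopMinorModel G H d f P) {S : Set V}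
    {a b : W} (h : H.Adj a b) {x : V} (hx : x ∈ (P h).support) (hxS : x ∉ S)
    (haS : f a ∉ S) (hint : ¬ HitsInterior P S (a, b)) :
    ∃ q : G.Walk x (f a), q.length ≤ 2 * d + 1 ∧ ∀ y ∈ q.support, y ∈ (P h).support ∧ y ∉ S := by
  classical
  refine ⟨((P h).takeUntil x hx).reverse, ?_, fun y hy => ?_⟩
  · rw [Walk.length_reverse]
    exact ((P h).length_takeUntil_le_length hx).trans (hM.2.2.1 h)
  rw [Walk.support_reverse, List.mem_reverse] at hy
  have hyP := (P h).support_takeUntil_subset_support hx hy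
  refine ⟨hyP, fun hyS => ?_⟩
  have hend : y = f a ∨ y = f b := by
    by_contra! hne
    exact hint ⟨h, y, hyP, hyS, hne.1, hne.2⟩
  rcases hend with rfl | rfl
  · exact haS hyS
  · exact Walk.endpoint_notMem_support_takeUntil (hM.2.1 h) hx
      (fun hbx => hxS (hbx ▸ hyS)) hy

lemma IsTopMinorModel.exists_anchor (hM : IsTopMinorModel G H d f P) {S : Set V} {a b : W}
    (h : H.Adj a b) {x : V} (hx : x ∈ (P h).support) (hxS : x ∉ S)
    (hint : ¬ HitsInterior P S (a, b)) (hend : f a ∉ S ∨ f b ∉ S) :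
    ∃ (u : W) (q : G.Walk x (f u)), q.length ≤ 2 * d + 1 ∧
      ∀ y ∈ q.support, y ∈ modelVerts P ∧ y ∉ S := by
  rcases hend with haS | hbS
  · obtain ⟨q, hq, hqS⟩ := hM.exists_walk_to_branch h hx hxS haS hint
    exact ⟨a, q, hq, fun y hy => ⟨⟨a, b, h, (hqS y hy).1⟩, (hqS y hy).2⟩⟩
  · have hint' : ¬ HitsInterior P S (b, a) := fun ⟨_, w, hw, hwS, hwb, hwa⟩ =>
      hint ⟨h, w, (hM.mem_support_symm h).1 hw, hwS, hwa, hwb⟩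
    obtain ⟨q, hq, hqS⟩ :=
      hM.exists_walk_to_branch h.symm ((hM.mem_support_symm h).2 hx) hxS hbS hint'
    exact ⟨b, q, hq, fun y hy => ⟨⟨b, a, h.symm, (hqS y hy).1⟩, (hqS y hy).2⟩⟩

lemma IsTopMinorModel.exists_walk_between_branches (hM : IsTopMinorModel G H d f P)
    {S : Set V} {u v : W} (hu : f u ∈ modelVerts P) (huS : f u ∉ S) (hvS : f v ∉ S)
    (huv : u = v ∨ (H.Adj u v ∧ ¬ HitsInterior P S (u, v))) :
    ∃ m : G.Walk (f u) (f v), m.length ≤ 2 * d + 1 ∧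
      ∀ y ∈ m.support, y ∈ modelVerts P ∧ y ∉ S := by
  rcases huv with rfl | ⟨h, hint⟩
  · exact ⟨.nil, by simp, by simpa using ⟨hu, huS⟩⟩
  refine ⟨P h, hM.2.2.1 h, fun y hy => ⟨⟨u, v, h, hy⟩, fun hyS => ?_⟩⟩
  have hend : y = f u ∨ y = f v := by
    by_contra! hne
    exact hint ⟨h, y, hy, hyS, hne.1, hne.2⟩
  rcases hend with rfl | rfl
  exacts [huS hyS, hvS hyS]

end TopMinorModel

theorem IsTopMinorModel.exists_short_walk_of_top {V W : Type} {G : SimpleGraph V} {d : ℕ}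
    {f : W → V} {P : ∀ ⦃u v : W⦄, (⊤ : SimpleGraph W).Adj u v → G.Walk (f u) (f v)}
    (hM : IsTopMinorModel G ⊤ d f P) {S X : Set V} (hS : S.Finite) (hX : X.Infinite)
    (hXM : X ⊆ modelVerts P) (hXS : Disjoint X S) :
    ∃ x ∈ X, ∃ y ∈ X, x ≠ y ∧ ∃ p : G.Walk x y, p.length ≤ 3 * (2 * d + 1) ∧
      ∀ z ∈ p.support, z ∈ modelVerts P ∧ z ∉ S := by
  set Bad : Set (W × W) := {e | HitsInterior P S e ∨ (f e.1 ∈ S ∧ f e.2 ∈ S)}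
  have hBad : Bad.Finite :=
    ((hM.finite_setOf_hitsInterior hS).union
      ((hS.preimage hM.1.injOn).prod (hS.preimage hM.1.injOn))).subset fun _ he => he
  set Z : Set V := ⋃ e ∈ Bad, edgeVerts P e
  have hZ : Z.Finite := hBad.biUnion fun e _ => edgeVerts_finite e
  have hanchor : ∀ x ∈ X \ Z, ∃ (u : W) (q : G.Walk x (f u)), q.length ≤ 2 * d + 1 ∧
      ∀ y ∈ q.support, y ∈ modelVerts P ∧ y ∉ S := by
    rintro x ⟨hxX, hxZ⟩
    obtain ⟨a, b, h, hx⟩ := hXM hxX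
    have hgood : (a, b) ∉ Bad := fun hab => hxZ (Set.mem_biUnion hab ⟨h, hx⟩)
    simp only [Bad, Set.mem_ofPred_eq, not_or, not_and_or] at hgood
    exact hM.exists_anchor h hx (Set.disjoint_left.1 hXS hxX) hgood.1 hgood.2
  have : Nonempty W := ⟨(hXM hX.nonempty.some_mem).choose⟩
  choose! anch hanch using hanchor
  obtain ⟨x, hx, y, hy, hxy, hxy'⟩ := (hX.sdiff hZ).exists_ne_map_eq_or_notMem anch
    ((hM.finite_setOf_hitsInterior hS).image Prod.fst)
  obtain ⟨qx, hqx, hqxS⟩ := hanch x hx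
  obtain ⟨qy, hqy, hqyS⟩ := hanch y hy
  have hx_end := hqxS _ qx.end_mem_support
  have hanch : anch x = anch y ∨
      ((⊤ : SimpleGraph W).Adj (anch x) (anch y) ∧ ¬ HitsInterior P S (anch x, anch y)) :=
    (em _).imp_right fun hne => ⟨hne, fun hit => (hxy'.resolve_left hne).1 ⟨_, hit, rfl⟩⟩
  obtain ⟨m, hm, hmS⟩ := hM.exists_walk_between_branches hx_end.1 hx_end.2
    (hqyS _ qy.end_mem_support).2 hanch
  refine ⟨x, hx.1, y, hy.1, hxy, qx.append (m.append qy.reverse), ?_, ?_⟩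
  · simp only [Walk.length_append, Walk.length_reverse]
    omega
  · intro z hz
    simp only [Walk.mem_support_append_iff, Walk.support_reverse,
      List.mem_reverse] at hz
    rcases hz with hz | hz | hz
    exacts [hqxS z hz, hmS z hz, hqyS z hz]

theorem qw_tnd_general (U : Ultrafilter ℕ)
    (C : GraphClass) (hqw : LimitQW U C) :
    ¬ ∃ d : ℕ, InLimitTopMinor U C d Komega := by
  rintro ⟨d, V, G, hG, f, P, hM⟩
  have hfM : ∀ u, f u ∈ modelVerts P :=
    fun u => ⟨u, u + 1, by simp [Komega], (P _).start_mem_support⟩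
  have : Infinite (modelVerts P) :=
    Infinite.of_injective (fun u => ⟨f u, hfM u⟩) fun _ _ h => hM.1 (congrArg Subtype.val h)
  obtain ⟨S, X, hS, hX, hscat⟩ :=
    hqw (3 * d + 2) _ _ (hG.of_isSubgraphOf (isSubgraphOf_induce G (modelVerts P))) this
  obtain ⟨_, ⟨x, hx, rfl⟩, _, ⟨y, hy, rfl⟩, hxy, p, hp, hpM⟩ :=
    hM.exists_short_walk_of_top (hS.image Subtype.val) (hX.image Subtype.val_injective.injOn)
      (Set.image_subset_iff.2 fun x _ => x.2)
      ((Set.disjoint_image_iff Subtype.val_injective).2 hscat.1)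
  have := hscat.lt_length_of_induce hx hy (fun h => hxy (congrArg _ h)) p
    (fun z hz => (hpM z hz).1) (fun z hz => (hpM z hz).2)
  omega

/-- If `C` is limit quasi-wide, then `C` is limit topologically nowhere
dense: `K_ω ∉ C* ∇̃ ω`. -/
theorem qw_tnd (U : Ultrafilter ℕ) (hU : ∀ a : ℕ, {a} ∉ U)
    (C : GraphClass) (hfin : FiniteClass C) (hqw : LimitQW U C) :
    ¬ ∃ d : ℕ, InLimitTopMinor U C d Komega :=
  qw_tnd_general U C hqw

end NWD
end

section
/- If a class C of finite graphs is limit nowhere dense (K_ω ∉ C*▽ω), then there exists a function s : ℕ → ℕ such that C is strongly uniformly limit quasi-wide with margin s: for every d ∈ ℕ, every graph G ∈ C*, and every infinite set W ⊆ V(G), there exists a set S ⊆ V(G) with |S| ≤ s(d) such that G−S contains an infinite d-scattered set contained in W. -/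
namespace NWD

open SimpleGraph Filter

/-!
Fix `d` and an infinite `W ⊆ V(G)`, and take a non-principal ultrafilter `𝒲` on `V(G)` containing
`W`. Given a finite deleted set `S`, call `v ∉ S` heavy at radius `t` if its `t`-ball in `G - S` is
`𝒲`-large. No vertex is heavy at radius `0`. If no vertex is heavy at radius `t`, then either at
most `m` vertices are heavy at radius `t + 1` and we delete them, or `m + 1` heavy vertices can be
joined pairwise through fresh vertices, which gives `K_{m+1}` as a `(t + 1)`-shallow minor with
finite branch sets. After `2d` rounds of deletion (at most `2dm` vertices) a greedy choice in `W`
yields an infinite `d`-scattered set. If no `m` works, then for every `m` some `G ∈ C*` has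
`K_{m+1}` as a `2d`-shallow minor with finite branch sets; by Łoś this happens already in a graph
of `C`, and the ultraproduct of these graphs has `K_ω` as a `2d`-shallow minor.
-/
section Walks

variable {V : Type*} {G : SimpleGraph V}

def Near (G : SimpleGraph V) (S : Set V) (r : ℕ) (u v : V) : Prop :=
  ∃ p : G.Walk u v, p.length ≤ r ∧ ∀ x ∈ p.support, x ∉ S

variable {S S' : Set V} {r : ℕ} {u v : V}

lemma Near.refl (hv : v ∉ S) : Near G S r v v :=
  ⟨.nil, Nat.zero_le r, by simpa using hv⟩

lemma Near.symm (h : Near G S r u v) : Near G S r v u := by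
  obtain ⟨p, hlen, hS⟩ := h
  exact ⟨p.reverse, by simpa using hlen, by simpa using hS⟩

lemma Near.anti (hSS' : S ⊆ S') (h : Near G S' r u v) : Near G S r u v := by
  obtain ⟨p, hlen, hS⟩ := h
  exact ⟨p, hlen, fun x hx hxS => hS x hx (hSS' hxS)⟩

lemma Near.eq_of_zero (h : Near G S 0 u v) : u = v := by
  obtain ⟨p, hlen, -⟩ := h
  exact p.eq_of_length_eq_zero (Nat.le_zero.mp hlen)

lemma near_of_mem_support [DecidableEq V] {p : G.Walk u v} (hlen : p.length ≤ r + 1)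
    (hS : ∀ y ∈ p.support, y ∉ S) {x : V} (hx : x ∈ p.support) (hxu : x ≠ u) :
    Near G S r x v := by
  refine ⟨p.dropUntil x hx, ?_, fun y hy => hS y (p.support_dropUntil_subset_support hx hy)⟩
  have hsplit := congrArg Walk.length (p.take_spec hx)
  rw [Walk.length_append] at hsplit
  have hpos : (p.takeUntil x hx).length ≠ 0 := fun h =>
    hxu ((p.takeUntil x hx).eq_of_length_eq_zero h).symm
  omega

lemma _root_.SimpleGraph.Walk.exists_prefix_adj_mem {T : Set V} :
    ∀ {a b : V} (q : G.Walk a b), a ∉ T → b ∈ T →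
      ∃ (c z : V) (q' : G.Walk a c), G.Adj c z ∧ z ∈ T ∧ q'.length ≤ q.length ∧
        ∀ x ∈ q'.support, x ∉ T ∧ x ∈ q.support
  | _, _, .nil, ha, hb => absurd hb ha
  | a, _, .cons (v := c) hac q, ha, hb => by
    by_cases hc : c ∈ T
    · exact ⟨a, c, .nil, hac, hc, Nat.zero_le _, by simpa using ha⟩
    · obtain ⟨c', z, q', hadj, hz, hlen, hq'⟩ := q.exists_prefix_adj_mem hc hb
      refine ⟨c', z, .cons hac q', hadj, hz, by simpa using hlen, ?_⟩
      simp only [Walk.support_cons, List.mem_cons, forall_eq_or_imp]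
      exact ⟨⟨ha, by simp⟩, fun x hx => ⟨(hq' x hx).1, Or.inr (hq' x hx).2⟩⟩

lemma _root_.SimpleGraph.Walk.length_induce (s : Set V) (p : G.Walk u v)
    (hp : ∀ x ∈ p.support, x ∈ s) :
    (p.induce s hp).length = p.length :=
  (Walk.length_map _ _).symm.trans (congrArg Walk.length (p.map_induce hp))

end Walks

/-- Vertex-set form of `IsShallowMinorModel`, which is easier to transport along maps and through
ultraproducts. -/
structure IsStarModel {V W : Type*} (G : SimpleGraph V) (H : SimpleGraph W) (d : ℕ)
    (c : W → V) (B : W → Set V) : Prop where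
  center_mem : ∀ w, c w ∈ B w
  exists_walk : ∀ w, ∀ x ∈ B w, ∃ p : G.Walk (c w) x, p.length ≤ d ∧ ∀ y ∈ p.support, y ∈ B w
  pairwise_disjoint : Pairwise fun w w' => Disjoint (B w) (B w')
  exists_adj : ∀ ⦃w w' : W⦄, H.Adj w w' → ∃ x ∈ B w, ∃ y ∈ B w', G.Adj x y

namespace IsStarModel

variable {V V' W : Type*} {G : SimpleGraph V} {H H' : SimpleGraph W} {d : ℕ} {c : W → V}
  {B : W → Set V}

lemma mono (hB : IsStarModel G H d c B) {d' : ℕ} (hd : d ≤ d') (hH : H' ≤ H) :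
    IsStarModel G H' d' c B where
  center_mem := hB.center_mem
  exists_walk w x hx := by
    obtain ⟨p, hp, hpB⟩ := hB.exists_walk w x hx
    exact ⟨p, hp.trans hd, hpB⟩
  pairwise_disjoint := hB.pairwise_disjoint
  exists_adj _ _ h := hB.exists_adj (hH h)

lemma map {G' : SimpleGraph V'} (hB : IsStarModel G H d c B) (f : G →g G')
    (hf : Function.Injective f) : IsStarModel G' H d (f ∘ c) (fun w => f '' B w) where
  center_mem w := Set.mem_image_of_mem f (hB.center_mem w)
  exists_walk := by
    rintro w _ ⟨x, hx, rfl⟩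
    obtain ⟨p, hp, hpB⟩ := hB.exists_walk w x hx
    refine ⟨p.map f, by simpa using hp, ?_⟩
    simp only [Walk.support_map, List.mem_map]
    rintro _ ⟨y, hy, rfl⟩
    exact Set.mem_image_of_mem f (hpB y hy)
  pairwise_disjoint w w' hww' :=
    (Set.disjoint_image_iff hf).mpr (hB.pairwise_disjoint hww')
  exists_adj w w' h := by
    obtain ⟨x, hx, y, hy, hxy⟩ := hB.exists_adj h
    exact ⟨f x, Set.mem_image_of_mem f hx, f y, Set.mem_image_of_mem f hy, f.map_adj hxy⟩

lemma union_support (hB : IsStarModel G H d c B) {i : W} {x : V} (p : G.Walk (c i) x)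
    (hp : p.length ≤ d) (hpB : ∀ k ≠ i, ∀ y ∈ p.support, y ∉ B k) :
    IsStarModel G H d c (fun k => B k ∪ {y | k = i ∧ y ∈ p.support}) where
  center_mem w := Or.inl (hB.center_mem w)
  exists_walk := by
    classical
    rintro w y (hy | ⟨rfl, hy⟩)
    · obtain ⟨q, hq, hqB⟩ := hB.exists_walk w y hy
      exact ⟨q, hq, fun z hz => Or.inl (hqB z hz)⟩
    · refine ⟨p.takeUntil y hy, (p.length_takeUntil_le_length hy).trans hp, fun z hz => ?_⟩
      exact Or.inr ⟨rfl, p.support_takeUntil_subset_support hy hz⟩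
  pairwise_disjoint k l hkl := by
    refine Set.disjoint_left.mpr ?_
    rintro y (hyk | ⟨rfl, hyk⟩) (hyl | ⟨rfl, hyl⟩)
    · exact Set.disjoint_left.mp (hB.pairwise_disjoint hkl) hyk hyl
    · exact hpB k hkl y hyl hyk
    · exact hpB l hkl.symm y hyk hyl
    · exact hkl rfl
  exists_adj w w' h := by
    obtain ⟨x, hx, y, hy, hxy⟩ := hB.exists_adj h
    exact ⟨x, Or.inl hx, y, Or.inl hy, hxy⟩

lemma sup_edge (hB : IsStarModel G H d c B) {i j : W} {x y : V} (hx : x ∈ B i) (hy : y ∈ B j)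
    (hxy : G.Adj x y) : IsStarModel G (H ⊔ edge i j) d c B where
  center_mem := hB.center_mem
  exists_walk := hB.exists_walk
  pairwise_disjoint := hB.pairwise_disjoint
  exists_adj w w' h := by
    rcases h with h | h
    · exact hB.exists_adj h
    · rcases ((edge_adj i j w w').mp h).1 with ⟨rfl, rfl⟩ | ⟨rfl, rfl⟩
      · exact ⟨x, hx, y, hy, hxy⟩
      · exact ⟨y, hy, x, hx, hxy.symm⟩

end IsStarModel

lemma isStarModel_bot {V W : Type*} (G : SimpleGraph V) (d : ℕ) {c : W → V}
    (hc : Function.Injective c) : IsStarModel G ⊥ d c (fun w => {c w}) where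
  center_mem w := rfl
  exists_walk := by
    rintro w x rfl
    exact ⟨.nil, Nat.zero_le d, by simp⟩
  pairwise_disjoint w w' h := Set.disjoint_singleton.mpr (hc.ne h)
  exists_adj w w' h := h.elim

lemma IsStarModel.isShallowMinor {V W : Type} {G : SimpleGraph V} {H : SimpleGraph W} {d : ℕ}
    {c : W → V} {B : W → Set V} (hB : IsStarModel G H d c B) : IsShallowMinor G H d := by
  refine ⟨fun w => (⊤ : G.Subgraph).induce (B w), fun w => ⟨⟨c w, hB.center_mem w⟩, ?_⟩,
    hB.pairwise_disjoint, fun w w' h => hB.exists_adj h⟩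
  rintro ⟨x, hx⟩
  obtain ⟨p, hp, hpB⟩ := hB.exists_walk w x hx
  refine ⟨(p.induce (B w) hpB).mapLe (induce_eq_coe_induce_top (B w)).le, ?_⟩
  exact (Walk.length_mapLe _ _).trans_le ((p.length_induce _ hpB).trans_le hp)

section Clique

variable {V W : Type*} {G : SimpleGraph V} {H : SimpleGraph W} {S : Set V} {r : ℕ} {c : W → V}
  {𝓕 : Filter V}

/-- The new vertex `y` is close to both centres and far from every vertex used so far, so the
walks to it add fresh vertices only; the walk from `c j` is cut where it first meets the walk
from `c i`. -/
lemma IsStarModel.exists_sup_edge [Finite W] [𝓕.NeBot]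
    (hlight : ∀ v ∉ S, ∀ᶠ y in 𝓕, ¬ Near G S r v y)
    (hheavy : ∀ w, ∀ᶠ y in 𝓕, Near G S (r + 1) (c w) y)
    {B : W → Set V} (hB : IsStarModel G H (r + 1) c B) (hfin : ∀ w, (B w).Finite)
    (hS : ∀ w, Disjoint (B w) S) {i j : W} (hij : i ≠ j) :
    ∃ B' : W → Set V, IsStarModel G (H ⊔ edge i j) (r + 1) c B' ∧ (∀ w, (B' w).Finite) ∧
      ∀ w, Disjoint (B' w) S := by
  classical
  have hF : (⋃ w, B w).Finite := Set.finite_iUnion hfin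
  obtain ⟨y, ⟨p, hp, hpS⟩, ⟨q, hq, hqS⟩, hfar⟩ : ∃ y, Near G S (r + 1) (c i) y ∧
      Near G S (r + 1) (c j) y ∧ ∀ f ∈ ⋃ w, B w, ¬ Near G S r f y := by
    refine ((hheavy i).and ((hheavy j).and (hF.eventually_all.2 fun f hf => hlight f ?_))).exists
    obtain ⟨w, hw⟩ := Set.mem_iUnion.mp hf
    exact Set.disjoint_left.mp (hS w) hw
  have hfresh : ∀ {a : V} (s : G.Walk a y), s.length ≤ r + 1 → (∀ x ∈ s.support, x ∉ S) →
      ∀ x ∈ s.support, x ≠ a → ∀ w, x ∉ B w :=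
    fun s hs hsS x hx hxa w hxw =>
      hfar x (Set.mem_iUnion.mpr ⟨w, hxw⟩) (near_of_mem_support hs hsS hx hxa)
  have hcenter : ∀ {k l : W}, k ≠ l → c l ∉ B k := fun hkl hl =>
    Set.disjoint_left.mp (hB.pairwise_disjoint hkl.symm) (hB.center_mem _) hl
  have hpB : ∀ k ≠ i, ∀ x ∈ p.support, x ∉ B k := by
    intro k hk x hx
    by_cases hxi : x = c i
    · exact hxi ▸ hcenter hk
    · exact hfresh p hp hpS x hx hxi k
  obtain ⟨a, z, q', haz, hz, hq'len, hq'⟩ := q.exists_prefix_adj_mem (T := {x | x ∈ p.support})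
    (fun h => hpB j hij.symm _ h (hB.center_mem j)) p.end_mem_support
  have hq'B : ∀ k ≠ j, ∀ x ∈ q'.support, x ∉ B k ∪ {x | k = i ∧ x ∈ p.support} := by
    rintro k hk x hx (hxk | ⟨-, hxp⟩)
    · by_cases hxj : x = c j
      · exact hcenter hk (hxj ▸ hxk)
      · exact hfresh q hq hqS x (hq' x hx).2 hxj k hxk
    · exact (hq' x hx).1 hxp
  have hB' := (hB.union_support p hp hpB).union_support q' (hq'len.trans hq) hq'B
  refine ⟨_, hB'.sup_edge (Or.inl (Or.inr ⟨rfl, hz⟩)) (Or.inr ⟨rfl, q'.end_mem_support⟩)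
    haz.symm, fun w => ?_, fun w => ?_⟩
  · exact ((hfin w).union (p.support.finite_toSet.subset fun x hx => hx.2)).union
      (q'.support.finite_toSet.subset fun x hx => hx.2)
  · refine Set.disjoint_union_left.mpr ⟨Set.disjoint_union_left.mpr ⟨hS w, ?_⟩, ?_⟩
    · exact Set.disjoint_left.mpr fun x hx => hpS x hx.2
    · exact Set.disjoint_left.mpr fun x hx => hqS x (hq' x hx.2).2

lemma exists_isStarModel_top [Finite W] [𝓕.NeBot]
    (hlight : ∀ v ∉ S, ∀ᶠ y in 𝓕, ¬ Near G S r v y) (hc : Function.Injective c)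
    (hcS : ∀ w, c w ∉ S) (hheavy : ∀ w, ∀ᶠ y in 𝓕, Near G S (r + 1) (c w) y) :
    ∃ B : W → Set V, IsStarModel G ⊤ (r + 1) c B ∧ ∀ w, (B w).Finite := by
  classical
  have := Fintype.ofFinite W
  suffices h : ∀ P : Finset (W × W), ∃ B : W → Set V,
      IsStarModel G (fromRel fun a b => (a, b) ∈ P) (r + 1) c B ∧ (∀ w, (B w).Finite) ∧
        ∀ w, Disjoint (B w) S by
    obtain ⟨B, hB, hfin, -⟩ := h Finset.univ
    exact ⟨B, hB.mono le_rfl fun a b hab => by simpa using hab.ne, hfin⟩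
  intro P
  induction P using Finset.induction_on with
  | empty =>
    refine ⟨fun w => {c w}, (isStarModel_bot G (r + 1) hc).mono le_rfl fun a b h => ?_,
      fun w => Set.finite_singleton _, fun w => Set.disjoint_singleton_left.mpr (hcS w)⟩
    simp at h
  | insert e P _ ih =>
    obtain ⟨B, hB, hfin, hS⟩ := ih
    obtain ⟨i, j⟩ := e
    obtain ⟨B', hB', hfin', hS'⟩ : ∃ B' : W → Set V,
        IsStarModel G ((fromRel fun a b => (a, b) ∈ P) ⊔ edge i j) (r + 1) c B' ∧
          (∀ w, (B' w).Finite) ∧ ∀ w, Disjoint (B' w) S := by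
      by_cases hij : i = j
      · rw [hij, sup_edge_self]
        exact ⟨B, hB, hfin, hS⟩
      · exact hB.exists_sup_edge hlight hheavy hfin hS hij
    refine ⟨B', hB'.mono le_rfl fun a b h => ?_, hfin', hS'⟩
    simp only [fromRel_adj, Finset.mem_insert, Prod.mk.injEq] at h
    simp only [sup_adj, fromRel_adj, edge_adj]
    tauto

end Clique

section Deletion

variable {V : Type} {G : SimpleGraph V}

lemma light_succ_or_exists_isStarModel (𝒲 : Ultrafilter V) {S : Set V} (hSfin : S.Finite)
    {r : ℕ} (hlight : ∀ v ∉ S, ∀ᶠ y in (𝒲 : Filter V), ¬ Near G S r v y) (m : ℕ) :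
    (∃ S' : Set V, S'.Finite ∧ S'.ncard ≤ S.ncard + m ∧
      ∀ v ∉ S', ∀ᶠ y in (𝒲 : Filter V), ¬ Near G S' (r + 1) v y) ∨
    ∃ (c : Fin (m + 1) → V) (B : Fin (m + 1) → Set V),
      IsStarModel G ⊤ (r + 1) c B ∧ ∀ i, (B i).Finite := by
  set heavy : Set V := {v | v ∉ S ∧ ∀ᶠ y in (𝒲 : Filter V), Near G S (r + 1) v y}
  by_cases hsmall : heavy.encard ≤ m
  · obtain ⟨hfin, hcard⟩ := Set.encard_le_coe_iff_finite_ncard_le.mp hsmall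
    refine Or.inl ⟨S ∪ heavy, hSfin.union hfin, (Set.ncard_union_le S heavy).trans (by omega),
      fun v hv => ?_⟩
    have hvS : v ∉ S := fun h => hv (Or.inl h)
    have hlight' : ¬ ∀ᶠ y in (𝒲 : Filter V), Near G S (r + 1) v y := fun h => hv (Or.inr ⟨hvS, h⟩)
    exact (Ultrafilter.eventually_not.mpr hlight').mono fun y hy h =>
      hy (h.anti Set.subset_union_left)
  · rw [not_le] at hsmall
    obtain ⟨v, -⟩ : heavy.Nonempty := Set.encard_pos.mp (pos_of_gt hsmall)
    have : Nonempty V := ⟨v⟩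
    have hle : (Set.univ : Set (Fin (m + 1))).encard ≤ heavy.encard := by
      simpa using Order.add_one_le_of_lt hsmall
    obtain ⟨c, hc, hinj⟩ := Set.finite_univ.exists_injOn_of_encard_le hle
    exact Or.inr ⟨c, exists_isStarModel_top hlight (Set.injOn_univ.mp hinj)
      (fun i => (hc trivial).1) (fun i => (hc trivial).2)⟩

lemma light_or_exists_isStarModel (𝒲 : Ultrafilter V) (h𝒲 : (𝒲 : Filter V) ≤ cofinite)
    (m : ℕ) : ∀ t : ℕ,
    (∃ S : Set V, S.Finite ∧ S.ncard ≤ t * m ∧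
      ∀ v ∉ S, ∀ᶠ y in (𝒲 : Filter V), ¬ Near G S t v y) ∨
    ∃ (c : Fin (m + 1) → V) (B : Fin (m + 1) → Set V),
      IsStarModel G ⊤ t c B ∧ ∀ i, (B i).Finite
  | 0 => Or.inl ⟨∅, Set.finite_empty, by simp, fun v _ =>
      ((eventually_cofinite_ne v).filter_mono h𝒲).mono fun y hy h => hy h.eq_of_zero.symm⟩
  | t + 1 => by
    rcases light_or_exists_isStarModel 𝒲 h𝒲 m t with ⟨S, hS, hcard, hlight⟩ | ⟨c, B, hB, hfin⟩
    · rcases light_succ_or_exists_isStarModel 𝒲 hS hlight m with ⟨S', hS', hcard', hlight'⟩ | h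
      · exact Or.inl ⟨S', hS', by rw [add_one_mul]; omega, hlight'⟩
      · exact Or.inr h
    · exact Or.inr ⟨c, B, hB.mono t.le_succ le_rfl, hfin⟩

lemma exists_infinite_scatteredIn (𝒲 : Ultrafilter V) (h𝒲 : (𝒲 : Filter V) ≤ cofinite)
    {X₀ : Set V} (hX₀ : X₀ ∈ 𝒲) {S : Set V} (hS : S.Finite) {d : ℕ}
    (hlight : ∀ v ∉ S, ∀ᶠ y in (𝒲 : Filter V), ¬ Near G S (2 * d) v y) :
    ∃ X ⊆ X₀, X.Infinite ∧ ScatteredIn G d S X := by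
  obtain ⟨f, hf, hfar⟩ := exists_seq_of_forall_finset_exists (fun y => y ∈ X₀ ∧ y ∉ S)
    (fun x y => ¬ Near G S (2 * d) x y) fun s hs =>
      (((Filter.eventually_mem_set.mpr hX₀).and (h𝒲 hS.compl_mem_cofinite)).and
        (s.eventually_all.mpr fun x hx => hlight x (hs x hx).2)).exists
  have hinj : Function.Injective f := by
    intro a b hab
    by_contra hne
    have hnear : Near G S (2 * d) (f a) (f b) := hab ▸ Near.refl (hf a).2
    rcases lt_or_gt_of_ne hne with h | h
    · exact hfar a b h hnear
    · exact hfar b a h hnear.symm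
  refine ⟨Set.range f, Set.range_subset_iff.mpr fun n => (hf n).1,
    Set.infinite_range_of_injective hinj, Set.disjoint_left.mpr ?_, ?_⟩
  · rintro _ ⟨n, rfl⟩
    exact (hf n).2
  · rintro _ ⟨a, rfl⟩ _ ⟨b, rfl⟩ hab p hpS
    by_contra! hlen
    have hnear : Near G S (2 * d) (f a) (f b) := ⟨p, hlen, hpS⟩
    rcases lt_or_gt_of_ne (fun h : a = b => hab (h ▸ rfl)) with h | h
    · exact hfar a b h hnear
    · exact hfar b a h hnear.symm

end Deletion

section Ultraproduct

variable {U : Ultrafilter ℕ} {Vs : ℕ → Type} {Gs : ∀ n, SimpleGraph (Vs n)}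

def UVertex.mk (U : Ultrafilter ℕ) (g : ∀ n, Vs n) : UVertex U Vs := Quotient.mk _ g

lemma UVertex.mk_out (x : UVertex U Vs) : UVertex.mk U x.out = x := Quotient.out_eq x

lemma UVertex.mk_eq_mk {g h : ∀ n, Vs n} (hgh : ∀ᶠ n in (U : Filter ℕ), g n = h n) :
    UVertex.mk U g = UVertex.mk U h :=
  Quotient.sound hgh

lemma UVertex.eventually_out_mk (g : ∀ n, Vs n) :
    ∀ᶠ n in (U : Filter ℕ), (UVertex.mk U g).out n = g n :=
  Quotient.exact (s := prodSetoid U Vs) (Quotient.out_eq _)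

lemma UGraph.mk_adj_mk {g h : ∀ n, Vs n} :
    (UGraph U Gs).Adj (UVertex.mk U g) (UVertex.mk U h) ↔
      ∀ᶠ n in (U : Filter ℕ), (Gs n).Adj (g n) (h n) :=
  Iff.rfl

lemma UVertex.eventually_out_ne {x y : UVertex U Vs} (h : x ≠ y) :
    ∀ᶠ n in (U : Filter ℕ), x.out n ≠ y.out n :=
  Ultrafilter.eventually_not.mpr fun h' =>
    h (by rw [← UVertex.mk_out x, ← UVertex.mk_out y]; exact UVertex.mk_eq_mk h')

lemma UGraph.adj_iff_eventually {x y : UVertex U Vs} :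
    (UGraph U Gs).Adj x y ↔ ∀ᶠ n in (U : Filter ℕ), (Gs n).Adj (x.out n) (y.out n) := by
  conv_lhs => rw [← UVertex.mk_out x, ← UVertex.mk_out y]
  exact UGraph.mk_adj_mk

lemma UGraph.eventually_exists_walk {x y : UVertex U Vs} (p : (UGraph U Gs).Walk x y) :
    ∀ᶠ n in (U : Filter ℕ), ∃ q : (Gs n).Walk (x.out n) (y.out n),
      q.length = p.length ∧ q.support = p.support.map fun z => z.out n := by
  induction p with
  | nil => exact .of_forall fun n => ⟨.nil, rfl, rfl⟩
  | cons h p ih =>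
    filter_upwards [UGraph.adj_iff_eventually.mp h, ih] with n hn ⟨q, hlen, hq⟩
    exact ⟨.cons hn q, by simp [hlen], by simp [hq]⟩

/-- The length bound lets the ultrafilter decide, one step at a time, whether the walks in the
factors stop or continue. -/
lemma UGraph.exists_walk_of_eventually {P : ∀ n, Set (Vs n)} (L : ℕ) :
    ∀ {a b : ∀ n, Vs n}, (∀ᶠ n in (U : Filter ℕ), ∃ q : (Gs n).Walk (a n) (b n),
      q.length ≤ L ∧ ∀ z ∈ q.support, z ∈ P n) →
    ∃ p : (UGraph U Gs).Walk (UVertex.mk U a) (UVertex.mk U b),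
      p.length ≤ L ∧ ∀ z ∈ p.support, ∀ᶠ n in (U : Filter ℕ), z.out n ∈ P n := by
  have hstart : ∀ {a : ∀ n, Vs n}, (∀ᶠ n in (U : Filter ℕ), a n ∈ P n) →
      ∀ᶠ n in (U : Filter ℕ), (UVertex.mk U a).out n ∈ P n := fun ha =>
    (ha.and (UVertex.eventually_out_mk _)).mono fun n h => h.2 ▸ h.1
  induction L with
  | zero =>
    intro a b h
    have hab : ∀ᶠ n in (U : Filter ℕ), a n = b n ∧ a n ∈ P n := h.mono fun n ⟨q, hq, hqP⟩ =>
      ⟨q.eq_of_length_eq_zero (Nat.le_zero.mp hq), hqP _ q.start_mem_support⟩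
    refine ⟨Walk.nil.copy rfl (UVertex.mk_eq_mk (hab.mono fun n h => h.1)), ?_, ?_⟩
    · rw [Walk.length_copy]
      rfl
    · rw [Walk.support_copy]
      simpa using hstart (hab.mono fun n h => h.2)
  | succ L ih =>
    intro a b h
    have hsplit : ∀ᶠ n in (U : Filter ℕ), (∃ q : (Gs n).Walk (a n) (b n),
        q.length ≤ L ∧ ∀ z ∈ q.support, z ∈ P n) ∨ (a n ∈ P n ∧ ∃ s, (Gs n).Adj (a n) s ∧
          ∃ q : (Gs n).Walk s (b n), q.length ≤ L ∧ ∀ z ∈ q.support, z ∈ P n) := by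
      filter_upwards [h] with n ⟨q, hq, hqP⟩
      generalize a n = x, b n = y at q
      cases q with
      | nil => exact Or.inl ⟨.nil, Nat.zero_le L, hqP⟩
      | cons hs q =>
        simp only [Walk.support_cons, List.mem_cons, forall_eq_or_imp] at hqP
        exact Or.inr ⟨hqP.1, _, hs, q, by simpa using hq, hqP.2⟩
    rcases Ultrafilter.eventually_or.mp hsplit with hshort | hlong
    · obtain ⟨p, hp, hpP⟩ := ih hshort
      exact ⟨p, hp.trans L.le_succ, hpP⟩
    · have : ∀ n, Nonempty (Vs n) := fun n => ⟨a n⟩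
      obtain ⟨s, hs⟩ := Filter.skolem.mp (hlong.mono fun n h => h.2)
      obtain ⟨p, hp, hpP⟩ := ih (hs.mono fun n h => h.2)
      have hadj : (UGraph U Gs).Adj (UVertex.mk U a) (UVertex.mk U s) := hs.mono fun n h => h.1
      refine ⟨.cons hadj p, Nat.succ_le_succ hp, ?_⟩
      rw [Walk.support_cons, List.forall_mem_cons]
      exact ⟨hstart (hlong.mono fun n h => h.1), hpP⟩

/-- With `W` and the branch sets finite, the model is described by finitely many conditions, which
hold simultaneously in almost every factor. -/
lemma IsStarModel.exists_factor {W : Type*} [Finite W] {H : SimpleGraph W} {D : ℕ}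
    {c : W → UVertex U Vs} {B : W → Set (UVertex U Vs)} (hB : IsStarModel (UGraph U Gs) H D c B)
    (hfin : ∀ w, (B w).Finite) :
    ∃ n, IsStarModel (Gs n) H D (fun w => (c w).out n) (fun w => (fun x => x.out n) '' B w) := by
  have hwalk : ∀ᶠ n in (U : Filter ℕ), ∀ w, ∀ x ∈ B w,
      ∃ q : (Gs n).Walk ((c w).out n) (x.out n),
        q.length ≤ D ∧ ∀ z ∈ q.support, z ∈ (fun x => x.out n) '' B w := by
    refine eventually_all.mpr fun w => (hfin w).eventually_all.mpr fun x hx => ?_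
    obtain ⟨p, hp, hpB⟩ := hB.exists_walk w x hx
    filter_upwards [UGraph.eventually_exists_walk p] with n ⟨q, hlen, hq⟩
    refine ⟨q, hlen ▸ hp, fun z hz => ?_⟩
    rw [hq] at hz
    obtain ⟨z', hz', rfl⟩ := List.mem_map.mp hz
    exact ⟨z', hpB z' hz', rfl⟩
  have hdisj : ∀ᶠ n in (U : Filter ℕ), ∀ w w', w ≠ w' → ∀ x ∈ B w, ∀ y ∈ B w',
      x.out n ≠ y.out n := by
    refine eventually_all.mpr fun w => eventually_all.mpr fun w' => ?_
    by_cases hww' : w = w'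
    · exact .of_forall fun n h => absurd hww' h
    refine ((hfin w).eventually_all.mpr fun x hx => (hfin w').eventually_all.mpr fun y hy =>
      UVertex.eventually_out_ne ?_).mono fun n hn _ => hn
    rintro rfl
    exact Set.disjoint_left.mp (hB.pairwise_disjoint hww') hx hy
  have hadj : ∀ᶠ n in (U : Filter ℕ), ∀ w w', H.Adj w w' →
      ∃ x ∈ B w, ∃ y ∈ B w', (Gs n).Adj (x.out n) (y.out n) := by
    refine eventually_all.mpr fun w => eventually_all.mpr fun w' => ?_
    by_cases h : H.Adj w w'
    · obtain ⟨x, hx, y, hy, hxy⟩ := hB.exists_adj h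
      exact (UGraph.adj_iff_eventually.mp hxy).mono fun n hn _ => ⟨x, hx, y, hy, hn⟩
    · exact .of_forall fun n h' => absurd h' h
  obtain ⟨n, hwalk, hdisj, hadj⟩ := (hwalk.and (hdisj.and hadj)).exists
  refine ⟨n, fun w => Set.mem_image_of_mem _ (hB.center_mem w), ?_, ?_, ?_⟩
  · rintro w _ ⟨x, hx, rfl⟩
    exact hwalk w x hx
  · refine fun w w' hww' => Set.disjoint_left.mpr ?_
    rintro _ ⟨x, hx, rfl⟩ ⟨y, hy, hxy⟩
    exact hdisj w w' hww' x hx y hy hxy.symm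
  · intro w w' h
    obtain ⟨x, hx, y, hy, hxy⟩ := hadj w w' h
    exact ⟨_, ⟨x, hx, rfl⟩, _, ⟨y, hy, rfl⟩, hxy⟩

/-- The `i`-th branch set of the limit model is the ultraproduct of the `i`-th branch sets, which
exist in almost every factor since `U` is non-principal. -/
lemma isShallowMinor_komega (hU : (U : Filter ℕ) ≤ cofinite) {D : ℕ}
    {c : ∀ n, Fin (n + 1) → Vs n} {B : ∀ n, Fin (n + 1) → Set (Vs n)}
    (hB : ∀ n, IsStarModel (Gs n) ⊤ D (c n) (B n)) : IsShallowMinor (UGraph U Gs) Komega D := by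
  set k : ℕ → ∀ n, Fin (n + 1) := fun i n => Fin.ofNat (n + 1) i
  have hk : ∀ i : ℕ, ∀ᶠ n in (U : Filter ℕ), (k i n : ℕ) = i := fun i =>
    ((eventually_ge_atTop i).filter_mono (Nat.cofinite_eq_atTop ▸ hU)).mono fun n hn => by
      rw [Fin.val_ofNat, Nat.mod_eq_of_lt (Nat.lt_succ_of_le hn)]
  have hne : ∀ i j : ℕ, i ≠ j → ∀ᶠ n in (U : Filter ℕ), k i n ≠ k j n := fun i j hij =>
    ((hk i).and (hk j)).mono fun n h hij' => hij (by rw [← h.1, ← h.2, hij'])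
  have : ∀ n, Nonempty (Vs n) := fun n => ⟨c n 0⟩
  refine IsStarModel.isShallowMinor (c := fun i => UVertex.mk U fun n => c n (k i n))
    (B := fun i => {x | ∀ᶠ n in (U : Filter ℕ), x.out n ∈ B n (k i n)}) ⟨?_, ?_, ?_, ?_⟩
  · exact fun i => (UVertex.eventually_out_mk _).mono fun n hn => hn ▸ (hB n).center_mem _
  · intro i x hx
    obtain ⟨p, hp, hpB⟩ := UGraph.exists_walk_of_eventually D
      (hx.mono fun n hxn => (hB n).exists_walk _ _ hxn)
    exact ⟨p.copy rfl (UVertex.mk_out x), by simpa using hp, by simpa using hpB⟩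
  · refine fun i j hij => Set.disjoint_left.mpr fun x hxi hxj => ?_
    obtain ⟨n, hij, hxi, hxj⟩ := ((hne i j hij).and (hxi.and hxj)).exists
    exact Set.disjoint_left.mp ((hB n).pairwise_disjoint hij) hxi hxj
  · intro i j hij
    obtain ⟨x, hx⟩ := Filter.skolem.mp
      ((hne i j hij).mono fun n h => (hB n).exists_adj ((top_adj _ _).mpr h))
    obtain ⟨y, hy⟩ := Filter.skolem.mp (hx.mono fun n h => h.2)
    refine ⟨UVertex.mk U x, ?_, UVertex.mk U y, ?_, hy.mono fun n h => h.2⟩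
    · filter_upwards [UVertex.eventually_out_mk x, hx] with n h1 h2
      exact h1 ▸ h2.1
    · filter_upwards [UVertex.eventually_out_mk y, hy] with n h1 h2
      exact h1 ▸ h2.1

end Ultraproduct

section LimitClass

variable {U : Ultrafilter ℕ} {C : GraphClass}

lemma InLimit.exists_scatteredIn_or_exists_isStarModel {V : Type} {G : SimpleGraph V}
    (hG : InLimit U C G) {X₀ : Set V} (hX₀ : X₀.Infinite) (d m : ℕ) :
    (∃ S X : Set V, S.Finite ∧ S.ncard ≤ 2 * d * m ∧ X ⊆ X₀ ∧ X.Infinite ∧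
      ScatteredIn G d S X) ∨
    ∃ (V' : Type) (G' : SimpleGraph V'), C V' G' ∧
      ∃ (c : Fin (m + 1) → V') (B : Fin (m + 1) → Set V'), IsStarModel G' ⊤ (2 * d) c B := by
  have := hX₀.cofinite_inf_principal_neBot
  have h𝒲 := Ultrafilter.of_le (cofinite ⊓ 𝓟 X₀)
  rcases light_or_exists_isStarModel (G := G) _ (h𝒲.trans inf_le_left) m (2 * d) with
    ⟨S, hS, hcard, hlight⟩ | ⟨c, B, hB, hfin⟩
  · obtain ⟨X, hX, hinf, hscat⟩ := exists_infinite_scatteredIn _ (h𝒲.trans inf_le_left)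
      (h𝒲 (mem_inf_of_right (mem_principal_self X₀))) hS hlight
    exact Or.inl ⟨S, X, hS, hcard, hX, hinf, hscat⟩
  · obtain ⟨Vs, Gs, hC, f, hf, hadj⟩ := hG
    obtain ⟨n, hn⟩ := (hB.map ⟨f, fun h => hadj h⟩ hf).exists_factor fun i => (hfin i).image f
    exact Or.inr ⟨Vs n, Gs n, hC n, _, _, hn⟩

lemma inLimitMinor_komega (hU : (U : Filter ℕ) ≤ cofinite) {D : ℕ}
    (h : ∀ m : ℕ, ∃ (V : Type) (G : SimpleGraph V), C V G ∧
      ∃ (c : Fin (m + 1) → V) (B : Fin (m + 1) → Set V), IsStarModel G ⊤ D c B) :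
    InLimitMinor U C D Komega := by
  choose Vs Gs hC c B hB using h
  exact ⟨_, UGraph U Gs, ⟨Vs, Gs, hC, id, Function.injective_id, fun _ _ h => h⟩,
    isShallowMinor_komega hU hB⟩

end LimitClass

theorem big_proof_general (U : Ultrafilter ℕ) (hU : ∀ a : ℕ, {a} ∉ U)
    (C : GraphClass)
    (hnd : ¬ ∃ d : ℕ, InLimitMinor U C d Komega) :
    ∃ s : ℕ → ℕ, StrongUniformLimitQW U C s := by
  have hU' : (U : Filter ℕ) ≤ cofinite := U.le_cofinite_or_eq_pure.resolve_right
    fun ⟨a, ha⟩ => hU a (ha ▸ Ultrafilter.mem_pure.mpr rfl)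
  have hmargin : ∀ d, ∃ m : ℕ, ∀ (V : Type) (G : SimpleGraph V), InLimit U C G →
      ∀ W : Set V, W.Infinite → ∃ S X : Set V, S.Finite ∧ S.ncard ≤ 2 * d * m ∧ X ⊆ W ∧
        X.Infinite ∧ ScatteredIn G d S X := by
    intro d
    by_contra! hbad
    refine hnd ⟨2 * d, inLimitMinor_komega hU' fun m => ?_⟩
    obtain ⟨V, G, hG, W, hW, hno⟩ := hbad m
    refine (hG.exists_scatteredIn_or_exists_isStarModel hW d m).resolve_left ?_
    rintro ⟨S, X, hS, hcard, hX, hinf, hscat⟩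
    exact hno S X hS hcard hX hinf hscat
  choose m hm using hmargin
  exact ⟨fun d => 2 * d * m d, hm⟩

/-- If `C` is limit nowhere dense (`K_ω ∉ C* ▽ ω`), then `C` is strongly
uniformly limit quasi-wide with some margin `s`. -/
theorem big_proof (U : Ultrafilter ℕ) (hU : ∀ a : ℕ, {a} ∉ U)
    (C : GraphClass) (hfin : FiniteClass C)
    (hnd : ¬ ∃ d : ℕ, InLimitMinor U C d Komega) :
    ∃ s : ℕ → ℕ, StrongUniformLimitQW U C s :=
  big_proof_general U hU C hnd

end NWD
end

section
/- If a class C of finite graphs is uniformly limit quasi-wide, then C is limit winning for splitter: for every d ∈ ℕ, splitter has a winning strategy in the limit d-splitter game on every graph of C*. -/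
/-!
Splitter answers connector's move `v` by deleting `v` together with, for every earlier move `u`,
the vertices of a walk of length at most `d` from `u` to `v` inside the arena of `u`'s round
(it exists since `v` survived that round). If connector could play forever, its moves would be
pairwise distinct, and quasi-wideness yields a finite `S` and infinitely many moves that are
`d`-scattered in `G - S`. Every vertex of `S` that is ever deleted is gone by some round `M`.
For two scattered moves `c i`, `c j` with `M < i < j`, the walk between them lies in the arena of
round `M` and is deleted in round `j`, so it avoids `S`: a walk of length `≤ d` in `G - S`.
-/

namespace NWD

open SimpleGraph Filter

open Classical in
noncomputable def chosenWalkVerts {V : Type} (G : SimpleGraph V) (d : ℕ) (A : Set V) (u v : V) :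
    Set V :=
  if h : ∃ p : G.Walk u v, p.length ≤ d ∧ ∀ y ∈ p.support, y ∈ A
  then {x | x ∈ h.choose.support} else ∅

lemma chosenWalkVerts_finite {V : Type} (G : SimpleGraph V) (d : ℕ) (A : Set V) (u v : V) :
    (chosenWalkVerts G d A u v).Finite := by
  unfold chosenWalkVerts
  split
  · exact List.finite_toSet _
  · exact Set.finite_empty

lemma exists_walk_eq_chosenWalkVerts {V : Type} {G : SimpleGraph V} {d : ℕ} {A : Set V}
    {u v : V} (h : ∃ p : G.Walk u v, p.length ≤ d ∧ ∀ y ∈ p.support, y ∈ A) :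
    ∃ p : G.Walk u v, p.length ≤ d ∧ (∀ y ∈ p.support, y ∈ A) ∧
      chosenWalkVerts G d A u v = {x | x ∈ p.support} :=
  ⟨h.choose, h.choose_spec.1, h.choose_spec.2, by rw [chosenWalkVerts, dif_pos h]⟩

lemma finite_setOf_append_singleton_prefix {α : Type*} (l : List α) :
    {x : List α × α | x.1 ++ [x.2] <+: l}.Finite := by
  refine Set.Finite.of_finite_image (f := fun x => x.1 ++ [x.2])
    ((List.finite_toSet l.inits).subset ?_) ?_
  · rintro _ ⟨x, hx, rfl⟩
    simpa [List.mem_inits] using hx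
  · rintro ⟨p, m⟩ - ⟨p', m'⟩ - h
    simpa using h

lemma Antitone.exists_forall_mem_of_mem {α : Type*} {A : ℕ → Set α} (hA : Antitone A)
    {S : Set α} (hS : S.Finite) : ∃ M, ∀ s ∈ S, s ∈ A M → ∀ n, s ∈ A n := by
  have hev : ∀ s ∈ S, ∀ᶠ M in atTop, s ∈ A M → ∀ n, s ∈ A n := by
    intro s _
    by_cases h : ∀ n, s ∈ A n
    · exact Eventually.of_forall fun _ _ => h
    · obtain ⟨n, hn⟩ := not_forall.1 h
      filter_upwards [eventually_ge_atTop n] with M hM hsM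
      exact absurd (hA hM hsM) hn
  exact ((eventually_all_finite hS).2 hev).exists

section Play

variable {V : Type} (G : SimpleGraph V) (d : ℕ) (σ : SplitterStrategy V) (c : ℕ → V)

def playArena (n : ℕ) : Set V := arenaAfter G d (splitterHist σ c n)

lemma splitterHist_prefix {m n : ℕ} (hmn : m ≤ n) :
    splitterHist σ c m <+: splitterHist σ c n := by
  induction n, hmn using Nat.le_induction with
  | base => exact List.prefix_refl _
  | succ n _ ih => exact ih.trans (List.prefix_append _ _)

lemma arenaAfter_append (l : List (V × Set V)) (m : V × Set V) :
    arenaAfter G d (l ++ [m]) = arenaStep G d (arenaAfter G d l) m.1 m.2 := by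
  simp [arenaAfter, List.foldl_append]

lemma playArena_succ (n : ℕ) :
    playArena G d σ c (n + 1) =
      arenaStep G d (playArena G d σ c n) (c n) (σ (splitterHist σ c n) (c n)) :=
  arenaAfter_append G d _ _

lemma antitone_playArena : Antitone (playArena G d σ c) :=
  antitone_nat_of_succ_le fun n => by
    rw [playArena_succ]
    exact fun _ hx => hx.1

end Play

/-- Splitter deletes connector's vertex `v` together with, for every earlier round (arena `p`,
connector's move `m.1`), the vertices of a short walk from `m.1` to `v` inside that arena. -/
noncomputable def walkRemovalStrategy {V : Type} (G : SimpleGraph V) (d : ℕ) :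
    SplitterStrategy V :=
  fun h v => ({v} ∪ ⋃ x ∈ {x : List (V × Set V) × (V × Set V) | x.1 ++ [x.2] <+: h},
    chosenWalkVerts G d (arenaAfter G d x.1) x.2.1 v) ∩ arenaAfter G d h

section WalkRemoval

variable {V : Type} {G : SimpleGraph V} {d : ℕ} {c : ℕ → V}

local notation "A" => playArena G d (walkRemovalStrategy G d) c

lemma walkRemoval_notMem_playArena_succ (k : ℕ) : c k ∉ A (k + 1) := by
  intro hk
  rw [playArena_succ] at hk
  exact hk.2.1 ⟨Or.inl rfl, hk.1⟩

lemma injective_of_forall_mem_playArena (hc : ∀ n, c n ∈ A n) : Function.Injective c := by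
  intro a b hab
  by_contra hne
  wlog h : a < b generalizing a b
  · exact this hab.symm (Ne.symm hne) (lt_of_le_of_ne (not_lt.1 h) (Ne.symm hne))
  exact walkRemoval_notMem_playArena_succ a
    (hab ▸ antitone_playArena G d _ c h (hc b))

lemma exists_deleted_walk_of_lt (hc : ∀ n, c n ∈ A n) {i j : ℕ} (hij : i < j) :
    ∃ p : G.Walk (c i) (c j), p.length ≤ d ∧ (∀ y ∈ p.support, y ∈ A i) ∧
      ∀ y ∈ p.support, y ∉ A (j + 1) := by
  have hcj : c j ∈ A (i + 1) := antitone_playArena G d _ c hij (hc j)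
  rw [playArena_succ] at hcj
  obtain ⟨-, -, q, hq, hqA⟩ := hcj
  obtain ⟨p, hp, hpA, hverts⟩ := exists_walk_eq_chosenWalkVerts ⟨q, hq, hqA⟩
  refine ⟨p, hp, hpA, fun y hy hyA => ?_⟩
  rw [playArena_succ] at hyA
  refine hyA.2.1 ⟨Or.inr ?_, hyA.1⟩
  refine Set.mem_biUnion (x := (splitterHist _ c i, _)) (splitterHist_prefix _ c hij) ?_
  change y ∈ chosenWalkVerts G d (A i) (c i) (c j)
  rw [hverts]
  exact hy

theorem walkRemovalStrategy_wins
    (hqw : ∀ W : Set V, W.Infinite →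
      ∃ S X : Set V, S.Finite ∧ X ⊆ W ∧ X.Infinite ∧ ScatteredIn G d S X) :
    SplitterWinsLimit G d (walkRemovalStrategy G d) := by
  refine ⟨fun c n _ => ⟨?_, Set.inter_subset_right⟩, fun c => ?_⟩
  · refine Set.Finite.inter_of_left ((Set.finite_singleton _).union ?_) _
    exact (finite_setOf_append_singleton_prefix _).biUnion fun _ _ => chosenWalkVerts_finite ..
  by_contra! hc
  change ∀ n, c n ∈ playArena G d _ c n at hc
  have hinj := injective_of_forall_mem_playArena hc
  obtain ⟨S, X, hS, hXc, hX, hscat⟩ := hqw _ (Set.infinite_range_of_injective hinj)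
  obtain ⟨M, hM⟩ := Antitone.exists_forall_mem_of_mem (antitone_playArena G d _ c) hS
  have hidx : {k | c k ∈ X}.Infinite :=
    Set.Infinite.preimage' (by rwa [Set.inter_eq_left.2 hXc])
  obtain ⟨i, hiX, hMi⟩ := hidx.exists_gt M
  obtain ⟨j, hjX, hij⟩ := hidx.exists_gt i
  obtain ⟨p, hp, hpA, hpdel⟩ := exists_deleted_walk_of_lt hc hij
  -- a vertex of `S` on `p` is in the arena of round `M`, so it is never deleted, unlike `p`
  have hpS : ∀ x ∈ p.support, x ∉ S := fun x hx hxS =>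
    hpdel x hx (hM x hxS (antitone_playArena G d _ c hMi.le (hpA x hx)) _)
  have := hscat.2 _ hiX _ hjX (hinj.ne hij.ne) p hpS
  omega

end WalkRemoval

theorem qw_gm_general (U : Ultrafilter ℕ)
    (C : GraphClass) (hqw : UniformLimitQW U C) :
    LimitWinningForSplitter U C :=
  fun d V G hG => ⟨walkRemovalStrategy G d, walkRemovalStrategy_wins (hqw d V G hG)⟩

/-- If `C` is uniformly limit quasi-wide, then `C` is limit winning for
splitter. -/
theorem qw_gm (U : Ultrafilter ℕ) (hU : ∀ a : ℕ, {a} ∉ U)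
    (C : GraphClass) (hfin : FiniteClass C) (hqw : UniformLimitQW U C) :
    LimitWinningForSplitter U C :=
  qw_gm_general U C hqw

end NWD
end
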